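/- arXiv:2010.04814 — 8 statements merged into one kernel-verified Lean document; each statement's English description precedes it below -/
import Mathlib

section
/- (Proposition 3.1) Assume ∫|y| dμ_dt(y) < ∞ for all d,t ∈ {0,1}. Then the following are equivalent: (i) for every strictly monotone function g : ℝ → ℝ that is integrable with respect to each μ_dt, one has ∫ g dμ₁₁ − ∫ g dμ₁₀ = ∫ g dμ₀₁ − ∫ g dμ₀₀ (parallel trends is invariant to transformations); (ii) the parallel trends of CDFs condition holds: F₁₁(y) − F₁₀(y) = F₀₁(y) − F₀₀(y) for all y ∈ ℝ. -/
open MeasureTheory Filter Topology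

/-- The approximating function: continuous, antitone, bounded in `[0,1]`,
converging pointwise to the indicator of `Iic y`. -/
noncomputable def phiFun (y : ℝ) (n : ℕ) (x : ℝ) : ℝ :=
  max 0 (min 1 (1 - n * (x - y)))

lemma phiFun_antitone (y : ℝ) (n : ℕ) : Antitone (phiFun y n) := by
  intro a b hab
  unfold phiFun
  have : (1 : ℝ) - n * (b - y) ≤ 1 - n * (a - y) := by
    have := Nat.cast_nonneg (α := ℝ) n
    nlinarith
  exact max_le_max le_rfl (min_le_min le_rfl this)

lemma phiFun_continuous (y : ℝ) (n : ℕ) : Continuous (phiFun y n) := by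
  unfold phiFun
  exact continuous_const.max (continuous_const.min (by fun_prop))

lemma phiFun_bounds (y : ℝ) (n : ℕ) (x : ℝ) :
    0 ≤ phiFun y n x ∧ phiFun y n x ≤ 1 := by
  refine ⟨le_max_left _ _, ?_⟩
  exact max_le zero_le_one (min_le_left _ _)

lemma phiFun_integrable (y : ℝ) (n : ℕ) (μ : Measure ℝ) [IsProbabilityMeasure μ] :
    Integrable (phiFun y n) μ := by
  refine (integrable_const (1 : ℝ)).mono'
    ((phiFun_continuous y n).aestronglyMeasurable) ?_
  filter_upwards with x
  have h := phiFun_bounds y n x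
  rw [Real.norm_eq_abs, abs_of_nonneg h.1]
  exact h.2

lemma phiFun_tendsto_indicator (y x : ℝ) :
    Tendsto (fun n : ℕ => phiFun y n x) atTop
      (𝓝 (Set.indicator (Set.Iic y) (fun _ => (1:ℝ)) x)) := by
  by_cases hx : x ≤ y
  · have : ∀ n : ℕ, phiFun y n x = 1 := by
      intro n
      unfold phiFun
      have h1 : (1 : ℝ) ≤ 1 - n * (x - y) := by
        have := Nat.cast_nonneg (α := ℝ) n
        nlinarith
      rw [min_eq_left h1, max_eq_right zero_le_one]
    simp only [this, Set.indicator_of_mem (Set.mem_Iic.mpr hx)]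
    exact tendsto_const_nhds
  · push_neg at hx
    have hev : ∀ᶠ n : ℕ in atTop, phiFun y n x = 0 := by
      have h := eventually_atTop.mpr ⟨⌈1 / (x - y)⌉₊, fun n hn => le_refl n⟩
      filter_upwards [eventually_ge_atTop ⌈1 / (x - y)⌉₊] with n hn
      have hxy : 0 < x - y := by linarith
      have h1 : 1 / (x - y) ≤ (n : ℝ) :=
        le_trans (Nat.le_ceil _) (by exact_mod_cast hn)
      have h2 : (1 : ℝ) ≤ n * (x - y) := by
        rw [div_le_iff₀ hxy] at h1; linarith
      unfold phiFun
      have : min 1 (1 - n * (x - y)) ≤ 0 := le_trans (min_le_right _ _) (by linarith)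
      exact max_eq_left this
    simp only [Set.indicator_of_notMem (by simpa using hx.not_ge : x ∉ Set.Iic y)]
    exact Tendsto.congr' (hev.mono fun n h => h.symm) tendsto_const_nhds

lemma phiFun_integral_tendsto (y : ℝ) (μ : Measure ℝ) [IsProbabilityMeasure μ] :
    Tendsto (fun n : ℕ => ∫ x, phiFun y n x ∂μ) atTop (𝓝 (μ (Set.Iic y)).toReal) := by
  have h := MeasureTheory.tendsto_integral_of_dominated_convergence
    (F := fun n x => phiFun y n x)
    (f := Set.indicator (Set.Iic y) (fun _ => (1:ℝ)))
    (bound := fun _ => (1:ℝ)) (μ := μ)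
    (fun n => (phiFun_continuous y n).aestronglyMeasurable)
    (integrable_const 1)
    (fun n => by
      filter_upwards with x
      have h := phiFun_bounds y n x
      rw [Real.norm_eq_abs, abs_of_nonneg h.1]; exact h.2)
    (by filter_upwards with x; exact phiFun_tendsto_indicator y x)
  have heq : ∫ x, Set.indicator (Set.Iic y) (fun _ => (1:ℝ)) x ∂μ
      = (μ (Set.Iic y)).toReal := by
    rw [MeasureTheory.integral_indicator_const (1:ℝ) measurableSet_Iic, smul_eq_mul, mul_one]; rfl
  rwa [heq] at h

/-- **Proposition 3.1.** Parallel trends is invariant to (strictly monotonic)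
transformations if and only if parallel trends holds for the CDFs. -/
theorem parallel_trends_invariant_iff_cdf
    (μ₁₁ μ₁₀ μ₀₁ μ₀₀ : Measure ℝ)
    [IsProbabilityMeasure μ₁₁] [IsProbabilityMeasure μ₁₀]
    [IsProbabilityMeasure μ₀₁] [IsProbabilityMeasure μ₀₀]
    (h₁₁ : Integrable (fun y : ℝ => y) μ₁₁)
    (h₁₀ : Integrable (fun y : ℝ => y) μ₁₀)
    (h₀₁ : Integrable (fun y : ℝ => y) μ₀₁)
    (h₀₀ : Integrable (fun y : ℝ => y) μ₀₀) :
    (∀ g : ℝ → ℝ, (StrictMono g ∨ StrictAnti g) →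
        Integrable g μ₁₁ → Integrable g μ₁₀ → Integrable g μ₀₁ → Integrable g μ₀₀ →
        (∫ y, g y ∂μ₁₁) - (∫ y, g y ∂μ₁₀) = (∫ y, g y ∂μ₀₁) - (∫ y, g y ∂μ₀₀))
      ↔
    (∀ y : ℝ, (μ₁₁ (Set.Iic y)).toReal - (μ₁₀ (Set.Iic y)).toReal
        = (μ₀₁ (Set.Iic y)).toReal - (μ₀₀ (Set.Iic y)).toReal) := by
  constructor
  · intro H y
    -- equality for the identity
    have hid := H (fun x => x) (Or.inl strictMono_id) h₁₁ h₁₀ h₀₁ h₀₀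
    -- equality for g_n = id - φ_n
    have key : ∀ n : ℕ,
        (∫ x, phiFun y n x ∂μ₁₁) - (∫ x, phiFun y n x ∂μ₁₀)
          = (∫ x, phiFun y n x ∂μ₀₁) - (∫ x, phiFun y n x ∂μ₀₀) := by
      intro n
      have hmono : StrictMono (fun x : ℝ => x - phiFun y n x) := by
        have h1 : Monotone (fun x : ℝ => -phiFun y n x) := (phiFun_antitone y n).neg
        intro a b hab
        have := h1 hab.le
        simp only [sub_eq_add_neg]
        exact add_lt_add_of_lt_of_le hab this
      have hint : ∀ (μ : Measure ℝ) [IsProbabilityMeasure μ],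
          Integrable (fun x : ℝ => x) μ → Integrable (fun x : ℝ => x - phiFun y n x) μ :=
        fun μ _ h => h.sub (phiFun_integrable y n μ)
      have hg := H (fun x => x - phiFun y n x) (Or.inl hmono)
        (hint μ₁₁ h₁₁) (hint μ₁₀ h₁₀) (hint μ₀₁ h₀₁) (hint μ₀₀ h₀₀)
      rw [integral_sub h₁₁ (phiFun_integrable y n μ₁₁),
          integral_sub h₁₀ (phiFun_integrable y n μ₁₀),
          integral_sub h₀₁ (phiFun_integrable y n μ₀₁),
          integral_sub h₀₀ (phiFun_integrable y n μ₀₀)] at hg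
      linarith
    have t11 := phiFun_integral_tendsto y μ₁₁
    have t10 := phiFun_integral_tendsto y μ₁₀
    have t01 := phiFun_integral_tendsto y μ₀₁
    have t00 := phiFun_integral_tendsto y μ₀₀
    have tlhs : Tendsto (fun n : ℕ =>
        ((∫ x, phiFun y n x ∂μ₁₁) - (∫ x, phiFun y n x ∂μ₁₀))
          - ((∫ x, phiFun y n x ∂μ₀₁) - (∫ x, phiFun y n x ∂μ₀₀))) atTop
        (𝓝 (((μ₁₁ (Set.Iic y)).toReal - (μ₁₀ (Set.Iic y)).toReal)
          - ((μ₀₁ (Set.Iic y)).toReal - (μ₀₀ (Set.Iic y)).toReal))) :=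
      ((t11.sub t10).sub (t01.sub t00))
    have tzero : Tendsto (fun _ : ℕ => (0:ℝ)) atTop
        (𝓝 (((μ₁₁ (Set.Iic y)).toReal - (μ₁₀ (Set.Iic y)).toReal)
          - ((μ₀₁ (Set.Iic y)).toReal - (μ₀₀ (Set.Iic y)).toReal))) := by
      refine Tendsto.congr (fun n => ?_) tlhs
      linarith [key n]
    have := tendsto_nhds_unique tzero tendsto_const_nhds
    linarith
  · intro H g _ hi11 hi10 hi01 hi00
    have key : μ₁₁ + μ₀₀ = μ₀₁ + μ₁₀ := by
      refine Measure.ext_of_Iic _ _ (fun a => ?_)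
      have ha := H a
      have e1 : ((μ₁₁ + μ₀₀) (Set.Iic a)).toReal = ((μ₀₁ + μ₁₀) (Set.Iic a)).toReal := by
        simp only [Measure.add_apply,
          ENNReal.toReal_add (measure_ne_top _ _) (measure_ne_top _ _)]
        linarith
      exact (ENNReal.toReal_eq_toReal_iff' (measure_ne_top _ _) (measure_ne_top _ _)).mp e1
    have hint : ∫ x, g x ∂(μ₁₁ + μ₀₀) = ∫ x, g x ∂(μ₀₁ + μ₁₀) := by rw [key]
    rw [integral_add_measure hi11 hi00, integral_add_measure hi01 hi10] at hint
    linarith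
end

section
/- If the parallel trends of CDFs condition holds, then for every Borel measurable function g : ℝ → ℝ that is integrable with respect to each μ_dt, one has ∫ g dμ₁₁ − ∫ g dμ₁₀ = ∫ g dμ₀₁ − ∫ g dμ₀₀. (In particular, parallel trends then holds not only for strictly monotone transformations but for all measurable transformations of the outcome.) -/
open MeasureTheory

/-- If parallel trends holds for the CDFs, then parallel trends holds for every
Borel measurable transformation of the outcome that is integrable with respect
to each of the four distributions. -/
theorem cdf_parallel_trends_implies_all_measurable
    (μ₁₁ μ₁₀ μ₀₁ μ₀₀ : Measure ℝ)
    [IsProbabilityMeasure μ₁₁] [IsProbabilityMeasure μ₁₀]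
    [IsProbabilityMeasure μ₀₁] [IsProbabilityMeasure μ₀₀]
    (hcdf : ∀ y : ℝ, (μ₁₁ (Set.Iic y)).toReal - (μ₁₀ (Set.Iic y)).toReal
        = (μ₀₁ (Set.Iic y)).toReal - (μ₀₀ (Set.Iic y)).toReal) :
    ∀ g : ℝ → ℝ, Measurable g →
      Integrable g μ₁₁ → Integrable g μ₁₀ → Integrable g μ₀₁ → Integrable g μ₀₀ →
      (∫ y, g y ∂μ₁₁) - (∫ y, g y ∂μ₁₀) = (∫ y, g y ∂μ₀₁) - (∫ y, g y ∂μ₀₀) := by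
  intro g hg h11 h10 h01 h00
  have hmeas : μ₁₁ + μ₀₀ = μ₀₁ + μ₁₀ := by
    refine Measure.ext_of_Iic _ _ (fun y => ?_)
    have f11 : μ₁₁ (Set.Iic y) ≠ ⊤ := measure_ne_top _ _
    have f10 : μ₁₀ (Set.Iic y) ≠ ⊤ := measure_ne_top _ _
    have f01 : μ₀₁ (Set.Iic y) ≠ ⊤ := measure_ne_top _ _
    have f00 : μ₀₀ (Set.Iic y) ≠ ⊤ := measure_ne_top _ _
    have h := hcdf y
    simp only [Measure.add_apply]
    rw [← ENNReal.toReal_eq_toReal_iff' (by finiteness) (by finiteness),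
      ENNReal.toReal_add f11 f00, ENNReal.toReal_add f01 f10]
    linarith
  have key : (∫ y, g y ∂μ₁₁) + (∫ y, g y ∂μ₀₀) = (∫ y, g y ∂μ₀₁) + (∫ y, g y ∂μ₁₀) := by
    rw [← integral_add_measure h11 h00, ← integral_add_measure h01 h10, hmeas]
  linarith
end

section
/- Assume ∫|y| dμ_dt(y) < ∞ for all d,t ∈ {0,1}. Then the equality ∫ g dμ₁₁ − ∫ g dμ₁₀ = ∫ g dμ₀₁ − ∫ g dμ₀₀ holds for every strictly monotone g : ℝ → ℝ integrable with respect to each μ_dt if and only if it holds for every Borel measurable g : ℝ → ℝ integrable with respect to each μ_dt. -/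
open MeasureTheory

/-- Parallel trends holds for every strictly monotone integrable transformation
if and only if it holds for every Borel measurable integrable transformation. -/
theorem parallel_trends_strictMono_iff_measurable
    (μ₁₁ μ₁₀ μ₀₁ μ₀₀ : Measure ℝ)
    [IsProbabilityMeasure μ₁₁] [IsProbabilityMeasure μ₁₀]
    [IsProbabilityMeasure μ₀₁] [IsProbabilityMeasure μ₀₀]
    (h₁₁ : Integrable (fun y : ℝ => y) μ₁₁)
    (h₁₀ : Integrable (fun y : ℝ => y) μ₁₀)
    (h₀₁ : Integrable (fun y : ℝ => y) μ₀₁)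
    (h₀₀ : Integrable (fun y : ℝ => y) μ₀₀) :
    (∀ g : ℝ → ℝ, (StrictMono g ∨ StrictAnti g) →
        Integrable g μ₁₁ → Integrable g μ₁₀ → Integrable g μ₀₁ → Integrable g μ₀₀ →
        (∫ y, g y ∂μ₁₁) - (∫ y, g y ∂μ₁₀) = (∫ y, g y ∂μ₀₁) - (∫ y, g y ∂μ₀₀))
      ↔
    (∀ g : ℝ → ℝ, Measurable g →
        Integrable g μ₁₁ → Integrable g μ₁₀ → Integrable g μ₀₁ → Integrable g μ₀₀ →
        (∫ y, g y ∂μ₁₁) - (∫ y, g y ∂μ₁₀) = (∫ y, g y ∂μ₀₁) - (∫ y, g y ∂μ₀₀)) := by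
  constructor
  · intro hmono
    -- Key: μ₁₁ + μ₀₀ = μ₀₁ + μ₁₀
    have hid : (∫ y, y ∂μ₁₁) - (∫ y, y ∂μ₁₀) = (∫ y, y ∂μ₀₁) - (∫ y, y ∂μ₀₀) :=
      hmono _ (Or.inl strictMono_id) h₁₁ h₁₀ h₀₁ h₀₀
    have key : ∀ t : ℝ,
        (μ₁₁ (Set.Ioi t)).toReal + (μ₀₀ (Set.Ioi t)).toReal
          = (μ₀₁ (Set.Ioi t)).toReal + (μ₁₀ (Set.Ioi t)).toReal := by
      intro t
      set f : ℝ → ℝ := fun x => x + (Set.Ioi t).indicator 1 x with hf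
      have hsm : StrictMono f := by
        intro a b hab
        simp only [hf, Set.indicator_apply, Set.mem_Ioi, Pi.one_apply]
        split_ifs with h1 h2 h2 <;> linarith
      have hint : ∀ (μ : Measure ℝ), IsProbabilityMeasure μ →
          Integrable (fun y : ℝ => y) μ → Integrable f μ := by
        intro μ _ hμ
        exact hμ.add ((integrable_const (1 : ℝ)).indicator measurableSet_Ioi)
      have hfint : ∀ (μ : Measure ℝ), IsProbabilityMeasure μ →
          Integrable (fun y : ℝ => y) μ →
          (∫ y, f y ∂μ) = (∫ y, y ∂μ) + (μ (Set.Ioi t)).toReal := by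
        intro μ inst hμ
        simp only [hf, Pi.one_def]
        rw [integral_add hμ ((integrable_const (1 : ℝ)).indicator measurableSet_Ioi)]
        congr 1
        exact integral_indicator_one measurableSet_Ioi
      have h := hmono f (Or.inl hsm) (hint _ inferInstance h₁₁) (hint _ inferInstance h₁₀)
        (hint _ inferInstance h₀₁) (hint _ inferInstance h₀₀)
      rw [hfint _ inferInstance h₁₁, hfint _ inferInstance h₁₀,
        hfint _ inferInstance h₀₁, hfint _ inferInstance h₀₀] at h
      linarith
    have keyE : ∀ t : ℝ, (μ₁₁ + μ₀₀) (Set.Ioi t) = (μ₀₁ + μ₁₀) (Set.Ioi t) := by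
      intro t
      have fin : ∀ (μ : Measure ℝ) (_ : IsProbabilityMeasure μ), μ (Set.Ioi t) ≠ ⊤ :=
        fun μ inst => measure_ne_top μ _
      have := key t
      simp only [Measure.add_apply]
      rw [← ENNReal.toReal_eq_toReal_iff' (by finiteness) (by finiteness)]
      rw [ENNReal.toReal_add (by finiteness) (by finiteness),
        ENNReal.toReal_add (by finiteness) (by finiteness)]
      exact this
    have hmeq : μ₁₁ + μ₀₀ = μ₀₁ + μ₁₀ := by
      have : ∀ t : ℝ, (μ₁₁ + μ₀₀) (Set.Iic t) = (μ₀₁ + μ₁₀) (Set.Iic t) := by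
        intro t
        have h1 : Set.Iic t = (Set.Ioi t)ᶜ := by simp
        rw [h1, measure_compl measurableSet_Ioi (by finiteness),
          measure_compl measurableSet_Ioi (by finiteness), keyE t]
        congr 1
        simp [Measure.add_apply]
      exact Measure.ext_of_Iic _ _ this
    intro g hg hg₁₁ hg₁₀ hg₀₁ hg₀₀
    have h1 : (∫ y, g y ∂(μ₁₁ + μ₀₀)) = (∫ y, g y ∂(μ₀₁ + μ₁₀)) := by rw [hmeq]
    rw [integral_add_measure hg₁₁ hg₀₀, integral_add_measure hg₀₁ hg₁₀] at h1
    linarith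
  · intro hmeas g hg hg₁₁ hg₁₀ hg₀₁ hg₀₀
    have : Measurable g := by
      rcases hg with h | h
      · exact h.monotone.measurable
      · exact h.antitone.measurable
    exact hmeas g this hg₁₁ hg₁₀ hg₀₁ hg₀₀
end

section
/- (Proposition 3.2, 'only if' direction) Suppose each μ_dt is absolutely continuous with respect to a common positive σ-finite Borel measure λ on ℝ, and the parallel trends of CDFs condition holds. Then there exist θ ∈ [0,1] and Borel probability measures γ₀, γ₁ (depending only on time t) and η₀, η₁ (depending only on group d) on ℝ such that μ_dt = θ·γ_t + (1−θ)·η_d for all d,t ∈ {0,1}. -/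
open MeasureTheory
open scoped ENNReal

lemma mixture_aux1 (x y : ℝ≥0∞) : (x - y) + min x y = x := by
  rcases le_total x y with h | h
  · simp [tsub_eq_zero_of_le h, min_eq_left h]
  · rw [min_eq_right h, tsub_add_cancel_of_le h]

lemma mixture_aux2 (a b c d : ℝ≥0∞) (hc : c ≠ ⊤) (hd : d ≠ ⊤) (hE : a + d = b + c) :
    (d - c) + min b a = b := by
  rcases le_total c d with h | h
  · have hab : a ≤ b := by
      have h1 : a + c ≤ b + c := hE ▸ add_le_add_right h a
      exact (ENNReal.add_le_add_iff_right hc).mp h1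
    rw [min_eq_right hab, ENNReal.sub_add_eq_add_sub h hc, add_comm d a, hE,
      ENNReal.add_sub_cancel_right hc]
  · have hba : b ≤ a := by
      have h1 : b + d ≤ a + d := by
        rw [hE]; exact add_le_add_right h b
      exact (ENNReal.add_le_add_iff_right hd).mp h1
    rw [tsub_eq_zero_of_le h, zero_add, min_eq_left hba]

set_option maxHeartbeats 1000000 in
/-- **Proposition 3.2, "only if" direction.** If each `μ_dt` is absolutely
continuous with respect to a common σ-finite measure `lam` and parallel trends
of CDFs holds, then the four distributions admit a mixture representation
`μ_dt = θ·γ_t + (1−θ)·η_d`. -/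
theorem cdf_parallel_trends_implies_mixture
    (μ₁₁ μ₁₀ μ₀₁ μ₀₀ : Measure ℝ)
    [IsProbabilityMeasure μ₁₁] [IsProbabilityMeasure μ₁₀]
    [IsProbabilityMeasure μ₀₁] [IsProbabilityMeasure μ₀₀]
    (lam : Measure ℝ) [SigmaFinite lam]
    (hac₁₁ : μ₁₁ ≪ lam) (hac₁₀ : μ₁₀ ≪ lam)
    (hac₀₁ : μ₀₁ ≪ lam) (hac₀₀ : μ₀₀ ≪ lam)
    (hcdf : ∀ y : ℝ, (μ₁₁ (Set.Iic y)).toReal - (μ₁₀ (Set.Iic y)).toReal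
        = (μ₀₁ (Set.Iic y)).toReal - (μ₀₀ (Set.Iic y)).toReal) :
    ∃ (θ : ℝ) (γ₀ γ₁ η₀ η₁ : Measure ℝ),
      0 ≤ θ ∧ θ ≤ 1 ∧
      IsProbabilityMeasure γ₀ ∧ IsProbabilityMeasure γ₁ ∧
      IsProbabilityMeasure η₀ ∧ IsProbabilityMeasure η₁ ∧
      μ₁₁ = ENNReal.ofReal θ • γ₁ + ENNReal.ofReal (1 - θ) • η₁ ∧
      μ₁₀ = ENNReal.ofReal θ • γ₀ + ENNReal.ofReal (1 - θ) • η₁ ∧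
      μ₀₁ = ENNReal.ofReal θ • γ₁ + ENNReal.ofReal (1 - θ) • η₀ ∧
      μ₀₀ = ENNReal.ofReal θ • γ₀ + ENNReal.ofReal (1 - θ) • η₀ := by
  -- Step 1: parallel trends of CDFs gives an equality of measures.
  have hmeq : μ₁₁ + μ₀₀ = μ₁₀ + μ₀₁ := by
    apply Measure.ext_of_Iic
    intro y
    rw [Measure.add_apply, Measure.add_apply,
      ← ENNReal.toReal_eq_toReal_iff' (by finiteness) (by finiteness),
      ENNReal.toReal_add (by finiteness) (by finiteness),
      ENNReal.toReal_add (by finiteness) (by finiteness)]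
    linarith [hcdf y]
  -- densities
  set f₁₁ := μ₁₁.rnDeriv lam with hf11
  set f₁₀ := μ₁₀.rnDeriv lam with hf10
  set f₀₁ := μ₀₁.rnDeriv lam with hf01
  set f₀₀ := μ₀₀.rnDeriv lam with hf00
  have hae : f₁₁ + f₀₀ =ᵐ[lam] f₁₀ + f₀₁ := by
    have h1 := (μ₁₁.rnDeriv_add μ₀₀ lam).symm
    have h2 := (μ₁₀.rnDeriv_add μ₀₁ lam)
    rw [hmeq] at h1
    exact h1.trans h2
  have m11 : Measurable f₁₁ := μ₁₁.measurable_rnDeriv lam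
  have m10 : Measurable f₁₀ := μ₁₀.measurable_rnDeriv lam
  have m01 : Measurable f₀₁ := μ₀₁.measurable_rnDeriv lam
  have m00 : Measurable f₀₀ := μ₀₀.measurable_rnDeriv lam
  set g₀ : ℝ → ℝ≥0∞ := fun x => f₀₀ x - f₀₁ x with hg0
  set g₁ : ℝ → ℝ≥0∞ := fun x => f₀₁ x - f₀₀ x with hg1
  set h₀ : ℝ → ℝ≥0∞ := fun x => min (f₀₀ x) (f₀₁ x) with hh0
  set h₁ : ℝ → ℝ≥0∞ := fun x => min (f₁₀ x) (f₁₁ x) with hh1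
  have mg0 : Measurable g₀ := m00.sub m01
  have mg1 : Measurable g₁ := m01.sub m00
  have mh0 : Measurable h₀ := m00.min m01
  have mh1 : Measurable h₁ := m10.min m11
  set G₀ := lam.withDensity g₀ with hG0
  set G₁ := lam.withDensity g₁ with hG1
  set H₀ := lam.withDensity h₀ with hH0
  set H₁ := lam.withDensity h₁ with hH1
  -- the a.e. pointwise decompositions
  have d00 : g₀ + h₀ =ᵐ[lam] f₀₀ :=
    Filter.Eventually.of_forall fun x => mixture_aux1 (f₀₀ x) (f₀₁ x)
  have d01 : g₁ + h₀ =ᵐ[lam] f₀₁ :=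
    Filter.Eventually.of_forall fun x => by
      show g₁ x + min (f₀₀ x) (f₀₁ x) = f₀₁ x
      rw [min_comm]
      exact mixture_aux1 (f₀₁ x) (f₀₀ x)
  have haefin : ∀ᵐ x ∂lam, f₀₁ x ≠ ⊤ ∧ f₀₀ x ≠ ⊤ := by
    filter_upwards [μ₀₁.rnDeriv_lt_top lam, μ₀₀.rnDeriv_lt_top lam] with x h1 h2
    exact ⟨h1.ne, h2.ne⟩
  have d10 : g₀ + h₁ =ᵐ[lam] f₁₀ := by
    filter_upwards [hae, haefin] with x hx hfin
    exact mixture_aux2 (f₁₁ x) (f₁₀ x) (f₀₁ x) (f₀₀ x) hfin.1 hfin.2 hx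
  have d11 : g₁ + h₁ =ᵐ[lam] f₁₁ := by
    filter_upwards [hae, haefin] with x hx hfin
    have h2 : f₁₀ x + f₀₁ x = f₁₁ x + f₀₀ x := hx.symm
    have := mixture_aux2 (f₁₀ x) (f₁₁ x) (f₀₀ x) (f₀₁ x) hfin.2 hfin.1 h2
    show g₁ x + min (f₁₀ x) (f₁₁ x) = f₁₁ x
    rw [min_comm]
    exact this
  -- the four measure decompositions
  have e00 : μ₀₀ = G₀ + H₀ := by
    rw [hG0, hH0, ← withDensity_add_left mg0,
      withDensity_congr_ae d00, Measure.withDensity_rnDeriv_eq μ₀₀ lam hac₀₀]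
  have e01 : μ₀₁ = G₁ + H₀ := by
    rw [hG1, hH0, ← withDensity_add_left mg1,
      withDensity_congr_ae d01, Measure.withDensity_rnDeriv_eq μ₀₁ lam hac₀₁]
  have e10 : μ₁₀ = G₀ + H₁ := by
    rw [hG0, hH1, ← withDensity_add_left mg0,
      withDensity_congr_ae d10, Measure.withDensity_rnDeriv_eq μ₁₀ lam hac₁₀]
  have e11 : μ₁₁ = G₁ + H₁ := by
    rw [hG1, hH1, ← withDensity_add_left mg1,
      withDensity_congr_ae d11, Measure.withDensity_rnDeriv_eq μ₁₁ lam hac₁₁]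
  clear hae d00 d01 d10 d11 haefin hmeq
  -- masses
  set A := G₀ Set.univ with hA
  set B := H₀ Set.univ with hB
  have hAB : A + B = 1 := by
    rw [hA, hB, ← Measure.add_apply, ← e00, measure_univ]
  have hAne : A ≠ ⊤ := fun h => by simp [h] at hAB
  have hBne : B ≠ ⊤ := fun h => by simp [h] at hAB
  have hAle : A ≤ 1 := le_of_le_of_eq (le_add_right le_rfl) hAB
  have hG1A : G₁ Set.univ = A := by
    have h1 : G₁ Set.univ + B = 1 := by
      rw [hB, ← Measure.add_apply, ← e01, measure_univ]
    exact (ENNReal.add_left_inj hBne).mp (h1.trans hAB.symm)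
  have hH1B : H₁ Set.univ = B := by
    have h1 : A + H₁ Set.univ = 1 := by
      rw [hA, ← Measure.add_apply, ← e10, measure_univ]
    exact (ENNReal.add_right_inj hAne).mp (h1.trans hAB.symm)
  clear_value G₀ G₁ H₀ H₁
  -- normalized measures
  set γ₀ : Measure ℝ := if A = 0 then μ₀₀ else A⁻¹ • G₀ with hγ₀
  set γ₁ : Measure ℝ := if A = 0 then μ₀₀ else A⁻¹ • G₁ with hγ₁
  set η₀ : Measure ℝ := if B = 0 then μ₀₀ else B⁻¹ • H₀ with hη₀
  set η₁ : Measure ℝ := if B = 0 then μ₀₀ else B⁻¹ • H₁ with hη₁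
  have hθA : ENNReal.ofReal A.toReal = A := ENNReal.ofReal_toReal hAne
  have hθB : ENNReal.ofReal (1 - A.toReal) = B := by
    rw [← ENNReal.ofReal_toReal hBne]
    congr 1
    have : A.toReal + B.toReal = 1 := by
      rw [← ENNReal.toReal_add hAne hBne, hAB, ENNReal.toReal_one]
    linarith
  have hsG0 : A • γ₀ = G₀ := by
    rw [hγ₀]; split_ifs with h
    · rw [h, zero_smul, (Measure.measure_univ_eq_zero.mp (hA ▸ h)).symm]
    · rw [smul_smul, ENNReal.mul_inv_cancel h hAne, one_smul]
  have hsG1 : A • γ₁ = G₁ := by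
    rw [hγ₁]; split_ifs with h
    · rw [h, zero_smul, (Measure.measure_univ_eq_zero.mp (hG1A ▸ h : G₁ Set.univ = 0)).symm]
    · rw [smul_smul, ENNReal.mul_inv_cancel h hAne, one_smul]
  have hsH0 : B • η₀ = H₀ := by
    rw [hη₀]; split_ifs with h
    · rw [h, zero_smul, (Measure.measure_univ_eq_zero.mp (hB ▸ h)).symm]
    · rw [smul_smul, ENNReal.mul_inv_cancel h hBne, one_smul]
  have hsH1 : B • η₁ = H₁ := by
    rw [hη₁]; split_ifs with h
    · rw [h, zero_smul, (Measure.measure_univ_eq_zero.mp (hH1B ▸ h : H₁ Set.univ = 0)).symm]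
    · rw [smul_smul, ENNReal.mul_inv_cancel h hBne, one_smul]
  have pγ₀ : IsProbabilityMeasure γ₀ := by
    rw [hγ₀]; split_ifs with h
    · infer_instance
    · exact ⟨by rw [Measure.smul_apply, smul_eq_mul, ← hA, ENNReal.inv_mul_cancel h hAne]⟩
  have pγ₁ : IsProbabilityMeasure γ₁ := by
    rw [hγ₁]; split_ifs with h
    · infer_instance
    · exact ⟨by rw [Measure.smul_apply, smul_eq_mul, hG1A, ENNReal.inv_mul_cancel h hAne]⟩
  have pη₀ : IsProbabilityMeasure η₀ := by
    rw [hη₀]; split_ifs with h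
    · infer_instance
    · exact ⟨by rw [Measure.smul_apply, smul_eq_mul, ← hB, ENNReal.inv_mul_cancel h hBne]⟩
  have pη₁ : IsProbabilityMeasure η₁ := by
    rw [hη₁]; split_ifs with h
    · infer_instance
    · exact ⟨by rw [Measure.smul_apply, smul_eq_mul, hH1B, ENNReal.inv_mul_cancel h hBne]⟩
  refine ⟨A.toReal, γ₀, γ₁, η₀, η₁, ENNReal.toReal_nonneg, ?_, pγ₀, pγ₁, pη₀, pη₁,
    ?_, ?_, ?_, ?_⟩
  · exact ENNReal.toReal_le_of_le_ofReal zero_le_one (by simpa using hAle)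
  · rw [hθA, hθB, hsG1, hsH1]; exact e11
  · rw [hθA, hθB, hsG0, hsH1]; exact e10
  · rw [hθA, hθB, hsG1, hsH0]; exact e01
  · rw [hθA, hθB, hsG0, hsH0]; exact e00
end

section
/- (Binary outcomes) Suppose each μ_dt is supported on {0,1}, i.e., μ_dt({0,1}) = 1 for all d,t ∈ {0,1}. Then the parallel trends assumption in means, ∫ y dμ₁₁ − ∫ y dμ₁₀ = ∫ y dμ₀₁ − ∫ y dμ₀₀, holds if and only if the parallel trends of CDFs condition holds: F₁₁(y) − F₁₀(y) = F₀₁(y) − F₀₀(y) for all y ∈ ℝ. -/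
open MeasureTheory

lemma binPT.compl_null (μ : Measure ℝ) [IsProbabilityMeasure μ]
    (hb : μ ({0, 1} : Set ℝ) = 1) : μ (({0, 1} : Set ℝ)ᶜ) = 0 := by
  have h := measure_compl (μ := μ) (s := ({0, 1} : Set ℝ)) (by measurability)
    (by simp)
  simp only [measure_univ, hb, tsub_self] at h
  exact h

lemma binPT.ae (μ : Measure ℝ) [IsProbabilityMeasure μ]
    (hb : μ ({0, 1} : Set ℝ) = 1) : ∀ᵐ y ∂μ, y = 0 ∨ y = 1 := by
  have h := binPT.compl_null μ hb
  rw [ae_iff]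
  refine measure_mono_null (fun y hy => ?_) h
  simpa using hy

lemma binPT.integral (μ : Measure ℝ) [IsProbabilityMeasure μ]
    (hb : μ ({0, 1} : Set ℝ) = 1) : ∫ y, y ∂μ = (μ {1}).toReal := by
  have hae := binPT.ae μ hb
  have : ∫ y, y ∂μ = ∫ y, Set.indicator {1} (fun _ => (1 : ℝ)) y ∂μ :=
    integral_congr_ae (hae.mono fun y hy => by
      rcases hy with h | h <;> simp [h])
  rw [this]
  exact integral_indicator_one (measurableSet_singleton 1)

lemma binPT.sum (μ : Measure ℝ) [IsProbabilityMeasure μ]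
    (hb : μ ({0, 1} : Set ℝ) = 1) :
    (μ {0}).toReal + (μ {1}).toReal = 1 := by
  have h : μ ({0, 1} : Set ℝ) = μ {0} + μ {1} := by
    rw [show ({0, 1} : Set ℝ) = {0} ∪ {1} from rfl]
    exact measure_union (by simp) (measurableSet_singleton 1)
  rw [hb] at h
  rw [← ENNReal.toReal_add (measure_ne_top μ _) (measure_ne_top μ _), ← h]
  simp

lemma binPT.cdf (μ : Measure ℝ) [IsProbabilityMeasure μ]
    (hb : μ ({0, 1} : Set ℝ) = 1) (y : ℝ) :
    (μ (Set.Iic y)).toReal =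
      if y < 0 then 0 else if y < 1 then (μ {0}).toReal else 1 := by
  have hc := binPT.compl_null μ hb
  have key : μ (Set.Iic y) = μ (Set.Iic y ∩ {0, 1}) :=
    (measure_inter_conull hc).symm
  split_ifs with h0 h1
  · have he : Set.Iic y ∩ ({0, 1} : Set ℝ) = ∅ := by
      ext x
      simp only [Set.mem_inter_iff, Set.mem_Iic, Set.mem_insert_iff,
        Set.mem_singleton_iff, Set.mem_empty_iff_false, iff_false, not_and]
      rintro hx (rfl | rfl) <;> linarith
    rw [key, he]; simp
  · have he : Set.Iic y ∩ ({0, 1} : Set ℝ) = {0} := by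
      ext x
      simp only [Set.mem_inter_iff, Set.mem_Iic, Set.mem_insert_iff,
        Set.mem_singleton_iff]
      constructor
      · rintro ⟨hx, rfl | rfl⟩
        · rfl
        · linarith
      · rintro rfl
        exact ⟨by linarith, Or.inl rfl⟩
    rw [key, he]
  · have he : Set.Iic y ∩ ({0, 1} : Set ℝ) = {0, 1} := by
      apply Set.inter_eq_self_of_subset_right
      rintro x (rfl | rfl) <;> simp <;> linarith
    rw [key, he, hb]; simp

/-- **Binary outcomes.** If each `μ_dt` is supported on `{0,1}`, then parallel
trends in means holds if and only if parallel trends of CDFs holds. -/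
theorem binary_parallel_trends_iff_cdf
    (μ₁₁ μ₁₀ μ₀₁ μ₀₀ : Measure ℝ)
    [IsProbabilityMeasure μ₁₁] [IsProbabilityMeasure μ₁₀]
    [IsProbabilityMeasure μ₀₁] [IsProbabilityMeasure μ₀₀]
    (hb₁₁ : μ₁₁ ({0, 1} : Set ℝ) = 1) (hb₁₀ : μ₁₀ ({0, 1} : Set ℝ) = 1)
    (hb₀₁ : μ₀₁ ({0, 1} : Set ℝ) = 1) (hb₀₀ : μ₀₀ ({0, 1} : Set ℝ) = 1) :
    ((∫ y, y ∂μ₁₁) - (∫ y, y ∂μ₁₀) = (∫ y, y ∂μ₀₁) - (∫ y, y ∂μ₀₀))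
      ↔
    (∀ y : ℝ, (μ₁₁ (Set.Iic y)).toReal - (μ₁₀ (Set.Iic y)).toReal
        = (μ₀₁ (Set.Iic y)).toReal - (μ₀₀ (Set.Iic y)).toReal) := by
  have i₁₁ := binPT.integral μ₁₁ hb₁₁
  have i₁₀ := binPT.integral μ₁₀ hb₁₀
  have i₀₁ := binPT.integral μ₀₁ hb₀₁
  have i₀₀ := binPT.integral μ₀₀ hb₀₀
  have s₁₁ := binPT.sum μ₁₁ hb₁₁
  have s₁₀ := binPT.sum μ₁₀ hb₁₀
  have s₀₁ := binPT.sum μ₀₁ hb₀₁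
  have s₀₀ := binPT.sum μ₀₀ hb₀₀
  constructor
  · intro h y
    rw [i₁₁, i₁₀, i₀₁, i₀₀] at h
    rw [binPT.cdf μ₁₁ hb₁₁, binPT.cdf μ₁₀ hb₁₀, binPT.cdf μ₀₁ hb₀₁,
      binPT.cdf μ₀₀ hb₀₀]
    split_ifs <;> linarith
  · intro h
    have h0 := h 0
    rw [binPT.cdf μ₁₁ hb₁₁, binPT.cdf μ₁₀ hb₁₀, binPT.cdf μ₀₁ hb₀₁,
      binPT.cdf μ₀₀ hb₀₀] at h0
    norm_num at h0
    rw [i₁₁, i₁₀, i₀₁, i₀₀]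
    linarith
end

section
/- (Identifiability of two-component Gaussian mixtures) Let m₁, m₂, m₃, m₄ ∈ ℝ and v₁, v₂, v₃, v₄ > 0, and let N(m, v) denote the Gaussian measure on ℝ with mean m and variance v. If N(m₁, v₁) + N(m₂, v₂) = N(m₃, v₃) + N(m₄, v₄) as measures on ℝ, then either ((m₁, v₁) = (m₃, v₃) and (m₂, v₂) = (m₄, v₄)) or ((m₁, v₁) = (m₄, v₄) and (m₂, v₂) = (m₃, v₃)). -/
open MeasureTheory ProbabilityTheory NNReal Real Filter
open scoped ENNReal

namespace GMixAux


/-- strict lex order on (b,a) -/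
def L (a b a' b' : ℝ) : Prop := b < b' ∨ (b = b' ∧ a < a')

lemma L_trans {a b a' b' a'' b'' : ℝ} (h1 : L a b a' b') (h2 : L a' b' a'' b'') :
    L a b a'' b'' := by
  rcases h1 with h1 | ⟨h1, h1'⟩ <;> rcases h2 with h2 | ⟨h2, h2'⟩
  · exact Or.inl (h1.trans h2)
  · exact Or.inl (h2 ▸ h1)
  · exact Or.inl (h1 ▸ h2)
  · exact Or.inr ⟨h1.trans h2, h1'.trans h2'⟩

lemma L_tri (a b a' b' : ℝ) : L a b a' b' ∨ (a = a' ∧ b = b') ∨ L a' b' a b := by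
  rcases lt_trichotomy b b' with hb | hb | hb
  · exact Or.inl (Or.inl hb)
  · rcases lt_trichotomy a a' with ha | ha | ha
    · exact Or.inl (Or.inr ⟨hb, ha⟩)
    · exact Or.inr (Or.inl ⟨ha, hb⟩)
    · exact Or.inr (Or.inr (Or.inr ⟨hb.symm, ha⟩))
  · exact Or.inr (Or.inr (Or.inl hb))

lemma tendsto_exp_zero {c d : ℝ} (h : L c d 0 0) :
    Tendsto (fun t : ℝ => rexp (c * t + d * t ^ 2)) atTop (nhds 0) := by
  have hid : Tendsto (fun t : ℝ => t) atTop atTop := tendsto_id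
  have hbot : Tendsto (fun t : ℝ => c * t + d * t ^ 2) atTop atBot := by
    rcases h with hd | ⟨hd, hc⟩
    · have h1 : Tendsto (fun t : ℝ => c + d * t) atTop atBot :=
        tendsto_atBot_add_const_left _ c ((tendsto_const_mul_atBot_of_neg hd).2 hid)
      have h2 := hid.atTop_mul_atBot₀ h1
      exact h2.congr (fun t => by ring)
    · subst hd
      have h2 : Tendsto (fun t : ℝ => c * t) atTop atBot :=
        (tendsto_const_mul_atBot_of_neg hc).2 hid
      exact h2.congr (fun t => by ring)
  exact Real.tendsto_exp_atBot.comp hbot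

lemma not_forall_eq {a₁ b₁ a₂ b₂ a₃ b₃ a₄ b₄ : ℝ}
    (h3 : L a₃ b₃ a₁ b₁) (h4 : L a₄ b₄ a₁ b₁) :
    ¬ ∀ t : ℝ, rexp (a₁*t+b₁*t^2) + rexp (a₂*t+b₂*t^2)
        = rexp (a₃*t+b₃*t^2) + rexp (a₄*t+b₄*t^2) := by
  intro h
  have h3' : L (a₃ - a₁) (b₃ - b₁) 0 0 := by
    rcases h3 with h' | ⟨h', h''⟩
    · exact Or.inl (by linarith)
    · exact Or.inr ⟨by linarith, by linarith⟩
  have h4' : L (a₄ - a₁) (b₄ - b₁) 0 0 := by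
    rcases h4 with h' | ⟨h', h''⟩
    · exact Or.inl (by linarith)
    · exact Or.inr ⟨by linarith, by linarith⟩
  have e3 := (tendsto_exp_zero h3').eventually_lt_const (by norm_num : (0:ℝ) < 1/2)
  have e4 := (tendsto_exp_zero h4').eventually_lt_const (by norm_num : (0:ℝ) < 1/2)
  obtain ⟨t, ht3, ht4⟩ := (e3.and e4).exists
  have key3 : rexp (a₃*t+b₃*t^2) < (1/2) * rexp (a₁*t+b₁*t^2) := by
    have : rexp (a₃*t+b₃*t^2) = rexp ((a₃-a₁)*t+(b₃-b₁)*t^2) * rexp (a₁*t+b₁*t^2) := by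
      rw [← Real.exp_add]; ring_nf
    rw [this]
    exact mul_lt_mul_of_pos_right ht3 (Real.exp_pos _)
  have key4 : rexp (a₄*t+b₄*t^2) < (1/2) * rexp (a₁*t+b₁*t^2) := by
    have : rexp (a₄*t+b₄*t^2) = rexp ((a₄-a₁)*t+(b₄-b₁)*t^2) * rexp (a₁*t+b₁*t^2) := by
      rw [← Real.exp_add]; ring_nf
    rw [this]
    exact mul_lt_mul_of_pos_right ht4 (Real.exp_pos _)
  have := h t
  have := Real.exp_pos (a₂*t+b₂*t^2)
  linarith

lemma exp_quad_inj {a b a' b' : ℝ}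
    (h : ∀ t : ℝ, rexp (a*t+b*t^2) = rexp (a'*t+b'*t^2)) : a = a' ∧ b = b' := by
  have h1 := Real.exp_injective (h 1)
  have h2 := Real.exp_injective (h (-1))
  constructor <;> nlinarith [h1, h2]

lemma pairing {a₁ b₁ a₂ b₂ a₃ b₃ a₄ b₄ : ℝ}
    (h : ∀ t : ℝ, rexp (a₁*t+b₁*t^2) + rexp (a₂*t+b₂*t^2)
        = rexp (a₃*t+b₃*t^2) + rexp (a₄*t+b₄*t^2)) :
    (a₁=a₃ ∧ b₁=b₃ ∧ a₂=a₄ ∧ b₂=b₄) ∨ (a₁=a₄ ∧ b₁=b₄ ∧ a₂=a₃ ∧ b₂=b₃) := by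
  -- first handle the cases where some pair on the left equals some pair on the right
  rcases L_tri a₁ b₁ a₃ b₃ with c13 | ⟨ha, hb⟩ | c31
  rotate_left
  · -- (a₁,b₁) = (a₃,b₃)
    subst ha; subst hb
    have h' : ∀ t : ℝ, rexp (a₂*t+b₂*t^2) = rexp (a₄*t+b₄*t^2) := fun t => by
      have := h t; linarith
    obtain ⟨ha, hb⟩ := exp_quad_inj h'
    exact Or.inl ⟨rfl, rfl, ha, hb⟩
  all_goals {
  rcases L_tri a₁ b₁ a₄ b₄ with c14 | ⟨ha, hb⟩ | c41
  rotate_left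
  · subst ha; subst hb
    have h' : ∀ t : ℝ, rexp (a₂*t+b₂*t^2) = rexp (a₃*t+b₃*t^2) := fun t => by
      have := h t; linarith
    obtain ⟨ha, hb⟩ := exp_quad_inj h'
    exact Or.inr ⟨rfl, rfl, ha, hb⟩
  all_goals {
  rcases L_tri a₂ b₂ a₃ b₃ with c23 | ⟨ha, hb⟩ | c32
  rotate_left
  · subst ha; subst hb
    have h' : ∀ t : ℝ, rexp (a₁*t+b₁*t^2) = rexp (a₄*t+b₄*t^2) := fun t => by
      have := h t; linarith
    obtain ⟨ha, hb⟩ := exp_quad_inj h'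
    exact Or.inr ⟨ha, hb, rfl, rfl⟩
  all_goals {
  rcases L_tri a₂ b₂ a₄ b₄ with c24 | ⟨ha, hb⟩ | c42
  rotate_left
  · subst ha; subst hb
    have h' : ∀ t : ℝ, rexp (a₁*t+b₁*t^2) = rexp (a₃*t+b₃*t^2) := fun t => by
      have := h t; linarith
    obtain ⟨ha, hb⟩ := exp_quad_inj h'
    exact Or.inl ⟨ha, hb, rfl, rfl⟩
  all_goals {
  exfalso
  have hP : ∀ t : ℝ, rexp (a₁*t+b₁*t^2) + rexp (a₂*t+b₂*t^2)
      = rexp (a₃*t+b₃*t^2) + rexp (a₄*t+b₄*t^2) := h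
  have hR : ∀ t : ℝ, rexp (a₃*t+b₃*t^2) + rexp (a₄*t+b₄*t^2)
      = rexp (a₁*t+b₁*t^2) + rexp (a₂*t+b₂*t^2) := fun t => (h t).symm
  have hS : ∀ t : ℝ, rexp (a₄*t+b₄*t^2) + rexp (a₃*t+b₃*t^2)
      = rexp (a₁*t+b₁*t^2) + rexp (a₂*t+b₂*t^2) := fun t => by have := h t; linarith
  have hQ : ∀ t : ℝ, rexp (a₂*t+b₂*t^2) + rexp (a₁*t+b₁*t^2)
      = rexp (a₃*t+b₃*t^2) + rexp (a₄*t+b₄*t^2) := fun t => by have := h t; linarith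
  first
  | exact not_forall_eq c31 c41 hP
  | exact not_forall_eq c13 c23 hR
  | exact not_forall_eq c14 c24 hS
  | exact not_forall_eq c32 c42 hQ
  | exact not_forall_eq c32 (L_trans c41 (L_trans c13 c32)) hQ
  | exact not_forall_eq (L_trans c31 (L_trans c14 c42)) c42 hQ } } } }



lemma exp_mul_pdf (m : ℝ) {v : ℝ≥0} (hv : v ≠ 0) (t x : ℝ) :
    rexp (t * x) * gaussianPDFReal m v x
      = rexp (t * m + v * t ^ 2 / 2) * gaussianPDFReal (m + t * v) v x := by
  have hv' : (v : ℝ) ≠ 0 := by exact_mod_cast hv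
  have key : t * x + -(x - m) ^ 2 / (2 * (v:ℝ))
      = (t * m + v * t ^ 2 / 2) + -(x - (m + t * v)) ^ 2 / (2 * (v:ℝ)) := by
    field_simp
    ring
  show rexp (t * x) * ((√(2 * π * v))⁻¹ * rexp (-(x - m) ^ 2 / (2 * (v:ℝ))))
      = rexp (t * m + v * t ^ 2 / 2) * ((√(2 * π * v))⁻¹ * rexp (-(x - (m + t * v)) ^ 2 / (2 * (v:ℝ))))
  calc rexp (t * x) * ((√(2 * π * v))⁻¹ * rexp (-(x - m) ^ 2 / (2 * (v:ℝ))))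
      = (√(2 * π * v))⁻¹ * rexp (t * x + -(x - m) ^ 2 / (2 * (v:ℝ))) := by
        rw [Real.exp_add]; ring
    _ = (√(2 * π * v))⁻¹ * rexp ((t * m + v * t ^ 2 / 2) + -(x - (m + t * v)) ^ 2 / (2 * (v:ℝ))) := by
        rw [key]
    _ = rexp (t * m + v * t ^ 2 / 2) * ((√(2 * π * v))⁻¹ * rexp (-(x - (m + t * v)) ^ 2 / (2 * (v:ℝ)))) := by
        rw [Real.exp_add]; ring

lemma integrable_exp_gaussian (m : ℝ) {v : ℝ≥0} (hv : v ≠ 0) (t : ℝ) :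
    Integrable (fun x => rexp (t * x)) (gaussianReal m v) := by
  rw [gaussianReal_of_var_ne_zero _ hv]
  rw [integrable_withDensity_iff (measurable_gaussianPDF m v)
    (ae_of_all _ fun x => ENNReal.ofReal_lt_top)]
  have : (fun x => rexp (t * x) * (gaussianPDF m v x).toReal)
      = fun x => rexp (t * m + v * t ^ 2 / 2) * gaussianPDFReal (m + t * v) v x := by
    ext x
    rw [gaussianPDF, ENNReal.toReal_ofReal (gaussianPDFReal_nonneg _ _ _), exp_mul_pdf m hv]
  rw [this]
  exact (integrable_gaussianPDFReal _ _).const_mul _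

lemma integral_exp_gaussian (m : ℝ) {v : ℝ≥0} (hv : v ≠ 0) (t : ℝ) :
    ∫ x, rexp (t * x) ∂(gaussianReal m v) = rexp (t * m + v * t ^ 2 / 2) := by
  rw [gaussianReal_of_var_ne_zero _ hv]
  have hd : gaussianPDF m v = fun x => ((gaussianPDFReal m v x).toNNReal : ℝ≥0∞) := rfl
  rw [hd, integral_withDensity_eq_integral_smul
    ((measurable_gaussianPDFReal m v).real_toNNReal)]
  have heq : ∀ x, (gaussianPDFReal m v x).toNNReal • rexp (t * x)
      = rexp (t * m + v * t ^ 2 / 2) * gaussianPDFReal (m + t * v) v x := fun x => by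
    rw [NNReal.smul_def, smul_eq_mul, Real.coe_toNNReal _ (gaussianPDFReal_nonneg m v x),
      mul_comm (gaussianPDFReal m v x), exp_mul_pdf m hv]
  rw [integral_congr_ae (ae_of_all _ heq), MeasureTheory.integral_const_mul,
    integral_gaussianPDFReal_eq_one _ hv, mul_one]


end GMixAux

open MeasureTheory ProbabilityTheory NNReal

/-- **Identifiability of two-component Gaussian mixtures.** If
`N(m₁,v₁) + N(m₂,v₂) = N(m₃,v₃) + N(m₄,v₄)` as measures on `ℝ` (with all
variances positive), then the parameter pairs agree up to permutation. -/
theorem gaussian_mixture_identifiable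
    (m₁ m₂ m₃ m₄ : ℝ) (v₁ v₂ v₃ v₄ : ℝ≥0)
    (hv₁ : 0 < v₁) (hv₂ : 0 < v₂) (hv₃ : 0 < v₃) (hv₄ : 0 < v₄)
    (h : gaussianReal m₁ v₁ + gaussianReal m₂ v₂
        = gaussianReal m₃ v₃ + gaussianReal m₄ v₄) :
    ((m₁, v₁) = (m₃, v₃) ∧ (m₂, v₂) = (m₄, v₄)) ∨
    ((m₁, v₁) = (m₄, v₄) ∧ (m₂, v₂) = (m₃, v₃)) := by
  have key : ∀ t : ℝ, Real.exp (m₁*t + ((v₁:ℝ)/2)*t^2) + Real.exp (m₂*t + ((v₂:ℝ)/2)*t^2)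
      = Real.exp (m₃*t + ((v₃:ℝ)/2)*t^2) + Real.exp (m₄*t + ((v₄:ℝ)/2)*t^2) := by
    intro t
    have hc : ∫ x, Real.exp (t * x) ∂(gaussianReal m₁ v₁ + gaussianReal m₂ v₂)
        = ∫ x, Real.exp (t * x) ∂(gaussianReal m₃ v₃ + gaussianReal m₄ v₄) := by rw [h]
    rw [integral_add_measure (GMixAux.integrable_exp_gaussian m₁ hv₁.ne' t)
        (GMixAux.integrable_exp_gaussian m₂ hv₂.ne' t),
      integral_add_measure (GMixAux.integrable_exp_gaussian m₃ hv₃.ne' t)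
        (GMixAux.integrable_exp_gaussian m₄ hv₄.ne' t),
      GMixAux.integral_exp_gaussian m₁ hv₁.ne' t, GMixAux.integral_exp_gaussian m₂ hv₂.ne' t,
      GMixAux.integral_exp_gaussian m₃ hv₃.ne' t, GMixAux.integral_exp_gaussian m₄ hv₄.ne' t]
      at hc
    rw [show t*m₁ + (v₁:ℝ)*t^2/2 = m₁*t + ((v₁:ℝ)/2)*t^2 from by ring,
      show t*m₂ + (v₂:ℝ)*t^2/2 = m₂*t + ((v₂:ℝ)/2)*t^2 from by ring,
      show t*m₃ + (v₃:ℝ)*t^2/2 = m₃*t + ((v₃:ℝ)/2)*t^2 from by ring,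
      show t*m₄ + (v₄:ℝ)*t^2/2 = m₄*t + ((v₄:ℝ)/2)*t^2 from by ring] at hc
    exact hc
  rcases GMixAux.pairing key with ⟨ha, hb, ha', hb'⟩ | ⟨ha, hb, ha', hb'⟩
  · refine Or.inl ⟨?_, ?_⟩
    · have : v₁ = v₃ := NNReal.coe_injective (by linarith)
      rw [ha, this]
    · have : v₂ = v₄ := NNReal.coe_injective (by linarith)
      rw [ha', this]
  · refine Or.inr ⟨?_, ?_⟩
    · have : v₁ = v₄ := NNReal.coe_injective (by linarith)
      rw [ha, this]
    · have : v₂ = v₃ := NNReal.coe_injective (by linarith)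
      rw [ha', this]
end

section
/- (Example: normally distributed outcomes) Suppose μ_dt = N(m_dt, v_dt) is Gaussian with mean m_dt ∈ ℝ and variance v_dt > 0 for each d,t ∈ {0,1}, and the parallel trends of CDFs condition holds. Then either (μ₁₁ = μ₀₁ and μ₁₀ = μ₀₀), i.e., the treated and comparison groups have the same distribution of Y(0) in each period, or (μ₁₁ = μ₁₀ and μ₀₁ = μ₀₀), i.e., each group's distribution of Y(0) does not change over time. -/
open MeasureTheory ProbabilityTheory NNReal Real Filter Topology

namespace GaussianDichotomyAux

lemma continuous_gaussianPDFReal (m : ℝ) (v : ℝ≥0) :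
    Continuous (gaussianPDFReal m v) := by
  rw [gaussianPDFReal_def]
  fun_prop

lemma ratio_tendsto_zero (m₁ m₂ : ℝ) (v₁ v₂ : ℝ≥0) (hv₁ : v₁ ≠ 0) (hv₂ : v₂ ≠ 0)
    (h : v₂ < v₁ ∨ (v₂ = v₁ ∧ m₂ < m₁)) :
    Tendsto (fun x => gaussianPDFReal m₂ v₂ x / gaussianPDFReal m₁ v₁ x) atTop (𝓝 0) := by
  have hv₁' : (0:ℝ) < v₁ := by exact_mod_cast hv₁.bot_lt
  have hv₂' : (0:ℝ) < v₂ := by exact_mod_cast hv₂.bot_lt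
  set a : ℝ := 1/(2*v₁) - 1/(2*v₂) with ha_def
  set b : ℝ := m₂/v₂ - m₁/v₁ with hb_def
  set c : ℝ := m₁^2/(2*v₁) - m₂^2/(2*v₂) with hc_def
  set C : ℝ := (√(2 * π * v₁)) * (√(2 * π * v₂))⁻¹ with hC_def
  have hs₁ : (0:ℝ) < √(2 * π * v₁) := Real.sqrt_pos.mpr (by positivity)
  have hs₂ : (0:ℝ) < √(2 * π * v₂) := Real.sqrt_pos.mpr (by positivity)
  have heq : (fun x => gaussianPDFReal m₂ v₂ x / gaussianPDFReal m₁ v₁ x)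
      = fun x => C * rexp (a*x^2 + b*x + c) := by
    funext x
    have he : a*x^2 + b*x + c = (-(x - m₂)^2 / (2*v₂)) - (-(x - m₁)^2 / (2*v₁)) := by
      rw [ha_def, hb_def, hc_def]
      field_simp
      ring
    simp only [gaussianPDFReal, he, Real.exp_sub, hC_def]
    field_simp
  rw [heq]
  have hq : Tendsto (fun x : ℝ => a*x^2 + b*x + c) atTop atBot := by
    rcases h with hlt | ⟨heqv, hm⟩
    · have hvv : (v₂:ℝ) < v₁ := by exact_mod_cast hlt
      have ha : a < 0 := by
        rw [ha_def, sub_neg]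
        apply one_div_lt_one_div_of_lt (by positivity)
        linarith
      have h1 : Tendsto (fun x : ℝ => a*x + b) atTop atBot :=
        tendsto_atBot_add_const_right _ b
          ((tendsto_const_mul_atBot_of_neg ha).mpr tendsto_id)
      have h2 : Tendsto (fun x : ℝ => x * (a*x + b)) atTop atBot :=
        tendsto_id.atTop_mul_atBot₀ h1
      have h3 := tendsto_atBot_add_const_right _ c h2
      refine h3.congr fun x => by ring
    · have hvv : (v₂:ℝ) = v₁ := by exact_mod_cast heqv
      have ha : a = 0 := by rw [ha_def, hvv]; ring
      have hb : b < 0 := by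
        rw [hb_def, hvv, div_sub_div_same]
        exact div_neg_of_neg_of_pos (by linarith) hv₁'
      have h1 : Tendsto (fun x : ℝ => b*x + c) atTop atBot :=
        tendsto_atBot_add_const_right _ c
          ((tendsto_const_mul_atBot_of_neg hb).mpr tendsto_id)
      refine h1.congr fun x => by rw [ha]; ring
  have := (Real.tendsto_exp_atBot.comp hq).const_mul C
  simpa using this

lemma contradiction_lemma (m₁ m₂ m₃ m₄ : ℝ) (v₁ v₂ v₃ v₄ : ℝ≥0)
    (hv₁ : v₁ ≠ 0) (hv₂ : v₂ ≠ 0) (hv₃ : v₃ ≠ 0) (hv₄ : v₄ ≠ 0)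
    (hsum : ∀ x, gaussianPDFReal m₁ v₁ x + gaussianPDFReal m₂ v₂ x
          = gaussianPDFReal m₃ v₃ x + gaussianPDFReal m₄ v₄ x)
    (h3 : v₃ < v₁ ∨ (v₃ = v₁ ∧ m₃ < m₁)) (h4 : v₄ < v₁ ∨ (v₄ = v₁ ∧ m₄ < m₁)) :
    False := by
  have t3 := ratio_tendsto_zero m₁ m₃ v₁ v₃ hv₁ hv₃ h3
  have t4 := ratio_tendsto_zero m₁ m₄ v₁ v₄ hv₁ hv₄ h4
  have e3 : ∀ᶠ x in atTop, gaussianPDFReal m₃ v₃ x / gaussianPDFReal m₁ v₁ x < 1/4 :=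
    t3.eventually_lt_const (by norm_num)
  have e4 : ∀ᶠ x in atTop, gaussianPDFReal m₄ v₄ x / gaussianPDFReal m₁ v₁ x < 1/4 :=
    t4.eventually_lt_const (by norm_num)
  obtain ⟨x, hx3, hx4⟩ := (e3.and e4).exists
  have p1 := gaussianPDFReal_pos m₁ v₁ x hv₁
  have p2 := gaussianPDFReal_nonneg m₂ v₂ x
  have hx3' : gaussianPDFReal m₃ v₃ x < (1/4) * gaussianPDFReal m₁ v₁ x :=
    (div_lt_iff₀ p1).mp hx3
  have hx4' : gaussianPDFReal m₄ v₄ x < (1/4) * gaussianPDFReal m₁ v₁ x :=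
    (div_lt_iff₀ p1).mp hx4
  have := hsum x
  linarith

lemma half_lemma (m₁ m₂ m₃ m₄ : ℝ) (v₁ v₂ v₃ v₄ : ℝ≥0)
    (hv₁ : v₁ ≠ 0) (hv₂ : v₂ ≠ 0) (hv₃ : v₃ ≠ 0) (hv₄ : v₄ ≠ 0)
    (hsum : ∀ x, gaussianPDFReal m₁ v₁ x + gaussianPDFReal m₂ v₂ x
          = gaussianPDFReal m₃ v₃ x + gaussianPDFReal m₄ v₄ x)
    (h3 : toLex ((v₃ : ℝ≥0), m₃) ≤ toLex ((v₁ : ℝ≥0), m₁))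
    (h4 : toLex ((v₄ : ℝ≥0), m₄) ≤ toLex ((v₁ : ℝ≥0), m₁)) :
    (m₁ = m₃ ∧ v₁ = v₃) ∨ (m₁ = m₄ ∧ v₁ = v₄) := by
  by_contra hc
  push_neg at hc
  obtain ⟨hc3, hc4⟩ := hc
  refine contradiction_lemma m₁ m₂ m₃ m₄ v₁ v₂ v₃ v₄ hv₁ hv₂ hv₃ hv₄ hsum ?_ ?_
  · rcases Prod.Lex.le_iff.mp h3 with h | ⟨hv, hm⟩
    · exact Or.inl h
    · exact Or.inr ⟨hv, lt_of_le_of_ne hm fun hmm => hc3 hmm.symm hv.symm⟩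
  · rcases Prod.Lex.le_iff.mp h4 with h | ⟨hv, hm⟩
    · exact Or.inl h
    · exact Or.inr ⟨hv, lt_of_le_of_ne hm fun hmm => hc4 hmm.symm hv.symm⟩

lemma pdf_cancel {f₁ f₂ f₃ f₄ : ℝ → ℝ}
    (hsum : ∀ x, f₁ x + f₂ x = f₃ x + f₄ x) (h13 : ∀ x, f₁ x = f₃ x) :
    ∀ x, f₂ x = f₄ x := fun x => by have := hsum x; have := h13 x; linarith

lemma gaussianReal_eq_of_pdfReal_eq {m m' : ℝ} {v v' : ℝ≥0} (hv : v ≠ 0) (hv' : v' ≠ 0)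
    (h : ∀ x, gaussianPDFReal m v x = gaussianPDFReal m' v' x) :
    gaussianReal m v = gaussianReal m' v' := by
  rw [gaussianReal_of_var_ne_zero _ hv, gaussianReal_of_var_ne_zero _ hv']
  congr 1
  funext x
  simp [gaussianPDF, h x]

end GaussianDichotomyAux

open GaussianDichotomyAux

/-- **Normally distributed outcomes.** If each `μ_dt` is Gaussian with positive
variance and parallel trends of CDFs holds, then either the treated and
comparison groups have the same distribution in each period, or each group's
distribution does not change over time. -/
theorem gaussian_cdf_parallel_trends_dichotomy
    (μ₁₁ μ₁₀ μ₀₁ μ₀₀ : Measure ℝ)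
    (m₁₁ m₁₀ m₀₁ m₀₀ : ℝ) (v₁₁ v₁₀ v₀₁ v₀₀ : ℝ≥0)
    (hv₁₁ : 0 < v₁₁) (hv₁₀ : 0 < v₁₀) (hv₀₁ : 0 < v₀₁) (hv₀₀ : 0 < v₀₀)
    (hg₁₁ : μ₁₁ = gaussianReal m₁₁ v₁₁) (hg₁₀ : μ₁₀ = gaussianReal m₁₀ v₁₀)
    (hg₀₁ : μ₀₁ = gaussianReal m₀₁ v₀₁) (hg₀₀ : μ₀₀ = gaussianReal m₀₀ v₀₀)
    (hcdf : ∀ y : ℝ, (μ₁₁ (Set.Iic y)).toReal - (μ₁₀ (Set.Iic y)).toReal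
        = (μ₀₁ (Set.Iic y)).toReal - (μ₀₀ (Set.Iic y)).toReal) :
    (μ₁₁ = μ₀₁ ∧ μ₁₀ = μ₀₀) ∨ (μ₁₁ = μ₁₀ ∧ μ₀₁ = μ₀₀) := by
  subst hg₁₁ hg₁₀ hg₀₁ hg₀₀
  have hv₁₁' := hv₁₁.ne'
  have hv₁₀' := hv₁₀.ne'
  have hv₀₁' := hv₀₁.ne'
  have hv₀₀' := hv₀₀.ne'
  -- Step 1: equality of the sum measures
  have hsummeas : gaussianReal m₁₁ v₁₁ + gaussianReal m₀₀ v₀₀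
      = gaussianReal m₁₀ v₁₀ + gaussianReal m₀₁ v₀₁ := by
    refine Measure.ext_of_Iic _ _ fun y => ?_
    have h1 : (gaussianReal m₁₁ v₁₁ (Set.Iic y)) ≠ ⊤ := measure_ne_top _ _
    have h2 : (gaussianReal m₀₀ v₀₀ (Set.Iic y)) ≠ ⊤ := measure_ne_top _ _
    have h3 : (gaussianReal m₁₀ v₁₀ (Set.Iic y)) ≠ ⊤ := measure_ne_top _ _
    have h4 : (gaussianReal m₀₁ v₀₁ (Set.Iic y)) ≠ ⊤ := measure_ne_top _ _
    simp only [Measure.add_apply]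
    rw [← ENNReal.toReal_eq_toReal_iff' (by finiteness) (by finiteness),
      ENNReal.toReal_add h1 h2, ENNReal.toReal_add h3 h4]
    have := hcdf y
    linarith
  -- Step 2: equality of density sums a.e.
  have hwd : volume.withDensity (gaussianPDF m₁₁ v₁₁ + gaussianPDF m₀₀ v₀₀)
      = volume.withDensity (gaussianPDF m₁₀ v₁₀ + gaussianPDF m₀₁ v₀₁) := by
    rw [withDensity_add_left (measurable_gaussianPDF _ _),
      withDensity_add_left (measurable_gaussianPDF _ _),
      ← gaussianReal_of_var_ne_zero _ hv₁₁', ← gaussianReal_of_var_ne_zero _ hv₀₀',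
      ← gaussianReal_of_var_ne_zero _ hv₁₀', ← gaussianReal_of_var_ne_zero _ hv₀₁']
    exact hsummeas
  have hae : (gaussianPDF m₁₁ v₁₁ + gaussianPDF m₀₀ v₀₀)
      =ᵐ[volume] (gaussianPDF m₁₀ v₁₀ + gaussianPDF m₀₁ v₀₁) := by
    refine (withDensity_eq_iff ?_ ?_ ?_).mp hwd
    · exact ((measurable_gaussianPDF _ _).add (measurable_gaussianPDF _ _)).aemeasurable
    · exact ((measurable_gaussianPDF _ _).add (measurable_gaussianPDF _ _)).aemeasurable
    · simp only [Pi.add_apply]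
      rw [lintegral_add_left (measurable_gaussianPDF _ _),
        lintegral_gaussianPDF_eq_one _ hv₁₁', lintegral_gaussianPDF_eq_one _ hv₀₀']
      simp
  -- Step 3: pointwise equality of real density sums
  have haer : (fun x => gaussianPDFReal m₁₁ v₁₁ x + gaussianPDFReal m₀₀ v₀₀ x)
      =ᵐ[volume] (fun x => gaussianPDFReal m₁₀ v₁₀ x + gaussianPDFReal m₀₁ v₀₁ x) := by
    filter_upwards [hae] with x hx
    simp only [Pi.add_apply, gaussianPDF, ← ENNReal.ofReal_add (gaussianPDFReal_nonneg _ _ _)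
      (gaussianPDFReal_nonneg _ _ _)] at hx
    exact (ENNReal.ofReal_eq_ofReal_iff
      (add_nonneg (gaussianPDFReal_nonneg _ _ _) (gaussianPDFReal_nonneg _ _ _))
      (add_nonneg (gaussianPDFReal_nonneg _ _ _) (gaussianPDFReal_nonneg _ _ _))).mp hx
  have hpt : ∀ x, gaussianPDFReal m₁₁ v₁₁ x + gaussianPDFReal m₀₀ v₀₀ x
      = gaussianPDFReal m₁₀ v₁₀ x + gaussianPDFReal m₀₁ v₀₁ x := by
    have hco : Continuous (fun x => gaussianPDFReal m₁₁ v₁₁ x + gaussianPDFReal m₀₀ v₀₀ x) :=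
      (continuous_gaussianPDFReal _ _).add (continuous_gaussianPDFReal _ _)
    have hco' : Continuous (fun x => gaussianPDFReal m₁₀ v₁₀ x + gaussianPDFReal m₀₁ v₀₁ x) :=
      (continuous_gaussianPDFReal _ _).add (continuous_gaussianPDFReal _ _)
    have := (hco.ae_eq_iff_eq volume hco').mp haer
    exact fun x => congrFun this x
  -- Step 4: case analysis on the lexicographic maximum
  set k₁ : Lex (ℝ≥0 × ℝ) := toLex (v₁₁, m₁₁) with hk₁
  set k₂ : Lex (ℝ≥0 × ℝ) := toLex (v₀₀, m₀₀) with hk₂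
  set k₃ : Lex (ℝ≥0 × ℝ) := toLex (v₁₀, m₁₀) with hk₃
  set k₄ : Lex (ℝ≥0 × ℝ) := toLex (v₀₁, m₀₁) with hk₄
  have hpt' : ∀ x, gaussianPDFReal m₁₀ v₁₀ x + gaussianPDFReal m₀₁ v₀₁ x
      = gaussianPDFReal m₁₁ v₁₁ x + gaussianPDFReal m₀₀ v₀₀ x := fun x => (hpt x).symm
  have hpt'' : ∀ x, gaussianPDFReal m₀₀ v₀₀ x + gaussianPDFReal m₁₁ v₁₁ x
      = gaussianPDFReal m₁₀ v₁₀ x + gaussianPDFReal m₀₁ v₀₁ x := fun x => by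
    have := hpt x; linarith
  have hpt''' : ∀ x, gaussianPDFReal m₀₁ v₀₁ x + gaussianPDFReal m₁₀ v₁₀ x
      = gaussianPDFReal m₁₁ v₁₁ x + gaussianPDFReal m₀₀ v₀₀ x := fun x => by
    have := hpt x; linarith
  rcases le_total (max k₃ k₄) (max k₁ k₂) with hM | hM
  · rcases le_total k₂ k₁ with h21 | h12
    · have h31 : k₃ ≤ k₁ := le_trans (le_max_left _ _) (le_trans hM (max_le le_rfl h21))
      have h41 : k₄ ≤ k₁ := le_trans (le_max_right _ _) (le_trans hM (max_le le_rfl h21))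
      rcases half_lemma m₁₁ m₀₀ m₁₀ m₀₁ v₁₁ v₀₀ v₁₀ v₀₁ hv₁₁' hv₀₀' hv₁₀' hv₀₁'
          hpt h31 h41 with ⟨hm, hv⟩ | ⟨hm, hv⟩
      · refine Or.inr ⟨by rw [hm, hv], (gaussianReal_eq_of_pdfReal_eq hv₀₀' hv₀₁'
          (fun x => by
            have h := hpt x
            have h2 : gaussianPDFReal m₁₁ v₁₁ x = gaussianPDFReal m₁₀ v₁₀ x := by rw [hm, hv]
            linarith)).symm⟩
      · refine Or.inl ⟨by rw [hm, hv], (gaussianReal_eq_of_pdfReal_eq hv₀₀' hv₁₀'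
          (fun x => by
            have h := hpt x
            have h2 : gaussianPDFReal m₁₁ v₁₁ x = gaussianPDFReal m₀₁ v₀₁ x := by rw [hm, hv]
            linarith)).symm⟩
    · have h32 : k₃ ≤ k₂ := le_trans (le_max_left _ _) (le_trans hM (max_le h12 le_rfl))
      have h42 : k₄ ≤ k₂ := le_trans (le_max_right _ _) (le_trans hM (max_le h12 le_rfl))
      rcases half_lemma m₀₀ m₁₁ m₁₀ m₀₁ v₀₀ v₁₁ v₁₀ v₀₁ hv₀₀' hv₁₁' hv₁₀' hv₀₁'
          hpt'' h32 h42 with ⟨hm, hv⟩ | ⟨hm, hv⟩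
      · refine Or.inl ⟨gaussianReal_eq_of_pdfReal_eq hv₁₁' hv₀₁'
          (fun x => by
            have h := hpt x
            have h2 : gaussianPDFReal m₀₀ v₀₀ x = gaussianPDFReal m₁₀ v₁₀ x := by rw [hm, hv]
            linarith), by rw [← hm, ← hv]⟩
      · refine Or.inr ⟨gaussianReal_eq_of_pdfReal_eq hv₁₁' hv₁₀'
          (fun x => by
            have h := hpt x
            have h2 : gaussianPDFReal m₀₀ v₀₀ x = gaussianPDFReal m₀₁ v₀₁ x := by rw [hm, hv]
            linarith), by rw [← hm, ← hv]⟩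
  · rcases le_total k₄ k₃ with h43 | h34
    · have h13 : k₁ ≤ k₃ := le_trans (le_max_left _ _) (le_trans hM (max_le le_rfl h43))
      have h23 : k₂ ≤ k₃ := le_trans (le_max_right _ _) (le_trans hM (max_le le_rfl h43))
      rcases half_lemma m₁₀ m₀₁ m₁₁ m₀₀ v₁₀ v₀₁ v₁₁ v₀₀ hv₁₀' hv₀₁' hv₁₁' hv₀₀'
          hpt' h13 h23 with ⟨hm, hv⟩ | ⟨hm, hv⟩
      · refine Or.inr ⟨by rw [← hm, ← hv], (gaussianReal_eq_of_pdfReal_eq hv₀₀' hv₀₁'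
          (fun x => by
            have h := hpt x
            have h2 : gaussianPDFReal m₁₀ v₁₀ x = gaussianPDFReal m₁₁ v₁₁ x := by rw [hm, hv]
            linarith)).symm⟩
      · refine Or.inl ⟨gaussianReal_eq_of_pdfReal_eq hv₁₁' hv₀₁'
          (fun x => by
            have h := hpt x
            have h2 : gaussianPDFReal m₁₀ v₁₀ x = gaussianPDFReal m₀₀ v₀₀ x := by rw [hm, hv]
            linarith), by rw [← hm, ← hv]⟩
    · have h14 : k₁ ≤ k₄ := le_trans (le_max_left _ _) (le_trans hM (max_le h34 le_rfl))
      have h24 : k₂ ≤ k₄ := le_trans (le_max_right _ _) (le_trans hM (max_le h34 le_rfl))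
      rcases half_lemma m₀₁ m₁₀ m₁₁ m₀₀ v₀₁ v₁₀ v₁₁ v₀₀ hv₀₁' hv₁₀' hv₁₁' hv₀₀'
          hpt''' h14 h24 with ⟨hm, hv⟩ | ⟨hm, hv⟩
      · refine Or.inl ⟨by rw [← hm, ← hv], (gaussianReal_eq_of_pdfReal_eq hv₀₀' hv₁₀'
          (fun x => by
            have h := hpt x
            have h2 : gaussianPDFReal m₀₁ v₀₁ x = gaussianPDFReal m₁₁ v₁₁ x := by rw [hm, hv]
            linarith)).symm⟩
      · refine Or.inr ⟨gaussianReal_eq_of_pdfReal_eq hv₁₁' hv₁₀'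
          (fun x => by
            have h := hpt x
            have h2 : gaussianPDFReal m₀₁ v₀₁ x = gaussianPDFReal m₀₀ v₀₀ x := by rw [hm, hv]
            linarith), by rw [← hm, ← hv]⟩
end

section
/- (Discrete testable implication) Let μ₁₀, μ₀₁, μ₀₀ be Borel probability measures on ℝ each supported on a common countable set S ⊆ ℝ (i.e., μ_dt(S) = 1 and each measure is purely atomic), with probability mass functions f_dt(y) = μ_dt({y}). Then there exists a Borel probability measure μ₁₁ on ℝ whose CDF F₁₁ satisfies F₁₁(y) − F₁₀(y) = F₀₁(y) − F₀₀(y) for all y ∈ ℝ if and only if f₁₀(y) + f₀₁(y) − f₀₀(y) ≥ 0 for all y ∈ ℝ. -/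
open MeasureTheory Filter Topology

/-- Measure of a countable set as a sum of point masses. -/
lemma meas_countable_tsum (μ : Measure ℝ) (t : Set ℝ) (ht : t.Countable) :
    μ t = ∑' b : t, μ {(b : ℝ)} := by
  have := tsum_measure_preimage_singleton (μ := μ) (f := id) ht
    (fun y _ => measurableSet_singleton y)
  simpa using this.symm

/-- The pre-CDF limit: `μ (Iic (y - 1/(n+1))) → μ (Iio y)`. -/
lemma tendsto_Iic_toReal (μ : Measure ℝ) [IsFiniteMeasure μ] (y : ℝ) :
    Tendsto (fun n : ℕ => (μ (Set.Iic (y - 1 / (n + 1)))).toReal) atTop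
      (𝓝 (μ (Set.Iio y)).toReal) := by
  have hmono : Monotone (fun n : ℕ => Set.Iic (y - 1 / ((n : ℝ) + 1))) := by
    intro n m hnm
    apply Set.Iic_subset_Iic.2
    have h1 : (1 : ℝ) / ((m : ℝ) + 1) ≤ 1 / ((n : ℝ) + 1) := by
      apply one_div_le_one_div_of_le (by positivity)
      exact_mod_cast Nat.succ_le_succ hnm
    linarith
  have hU : (⋃ n : ℕ, Set.Iic (y - 1 / ((n : ℝ) + 1))) = Set.Iio y := by
    ext x
    simp only [Set.mem_iUnion, Set.mem_Iic, Set.mem_Iio]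
    constructor
    · rintro ⟨n, hn⟩
      have : (0 : ℝ) < 1 / ((n : ℝ) + 1) := by positivity
      linarith
    · intro hx
      obtain ⟨n, hn⟩ := exists_nat_one_div_lt (sub_pos.2 hx)
      exact ⟨n, by linarith⟩
  have h := tendsto_measure_iUnion_atTop (μ := μ)
    (s := fun n : ℕ => Set.Iic (y - 1 / ((n : ℝ) + 1))) hmono
  rw [hU] at h
  exact (ENNReal.tendsto_toReal (measure_ne_top μ _)).comp h

/-- Decomposition of CDF at an atom. -/
lemma Iic_toReal_split (μ : Measure ℝ) [IsFiniteMeasure μ] (y : ℝ) :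
    (μ (Set.Iic y)).toReal = (μ (Set.Iio y)).toReal + (μ {y}).toReal := by
  have hd : Disjoint (Set.Iio y) {y} := by
    simp only [Set.disjoint_left, Set.mem_Iio, Set.mem_singleton_iff]
    exact fun a ha => ha.ne
  have hu : Set.Iio y ∪ {y} = Set.Iic y := by
    ext x; simp only [Set.mem_union, Set.mem_Iio, Set.mem_singleton_iff, Set.mem_Iic]
    constructor
    · rintro (h | h) <;> simp [h.le, h]
    · intro h; rcases lt_or_eq_of_le h with h | h
      · exact Or.inl h
      · exact Or.inr h
  rw [← hu, measure_union hd (measurableSet_singleton y),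
    ENNReal.toReal_add (measure_ne_top μ _) (measure_ne_top μ _)]

/-- **Discrete testable implication.** If `μ₁₀, μ₀₁, μ₀₀` are supported on a
common countable set `S`, then a probability measure `μ₁₁` satisfying parallel
trends of CDFs exists if and only if the implied probability mass function
`f₁₀(y) + f₀₁(y) − f₀₀(y)` is nonnegative at every `y`. -/
theorem discrete_counterfactual_exists_iff_pmf_nonneg
    (μ₁₀ μ₀₁ μ₀₀ : Measure ℝ)
    [IsProbabilityMeasure μ₁₀] [IsProbabilityMeasure μ₀₁] [IsProbabilityMeasure μ₀₀]
    (S : Set ℝ) (hS : S.Countable)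
    (hs₁₀ : μ₁₀ S = 1) (hs₀₁ : μ₀₁ S = 1) (hs₀₀ : μ₀₀ S = 1) :
    (∃ μ₁₁ : Measure ℝ, IsProbabilityMeasure μ₁₁ ∧
        ∀ y : ℝ, (μ₁₁ (Set.Iic y)).toReal - (μ₁₀ (Set.Iic y)).toReal
          = (μ₀₁ (Set.Iic y)).toReal - (μ₀₀ (Set.Iic y)).toReal)
      ↔
    (∀ y : ℝ, 0 ≤ (μ₁₀ {y}).toReal + (μ₀₁ {y}).toReal - (μ₀₀ {y}).toReal) := by
  constructor
  · -- Forward: existence implies nonnegativity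
    rintro ⟨ν, hprob, hF⟩ y
    -- limits of CDFs from the left
    have hlim : (ν (Set.Iio y)).toReal - (μ₁₀ (Set.Iio y)).toReal
        = (μ₀₁ (Set.Iio y)).toReal - (μ₀₀ (Set.Iio y)).toReal := by
      have h1 := (tendsto_Iic_toReal ν y).sub (tendsto_Iic_toReal μ₁₀ y)
      have h2 := (tendsto_Iic_toReal μ₀₁ y).sub (tendsto_Iic_toReal μ₀₀ y)
      have heq : (fun n : ℕ => (ν (Set.Iic (y - 1 / (n + 1)))).toReal
          - (μ₁₀ (Set.Iic (y - 1 / (n + 1)))).toReal)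
          = fun n : ℕ => (μ₀₁ (Set.Iic (y - 1 / (n + 1)))).toReal
          - (μ₀₀ (Set.Iic (y - 1 / (n + 1)))).toReal := by
        funext n; exact hF _
      rw [heq] at h1
      exact tendsto_nhds_unique h1 h2
    have e0 := Iic_toReal_split ν y
    have e1 := Iic_toReal_split μ₁₀ y
    have e2 := Iic_toReal_split μ₀₁ y
    have e3 := Iic_toReal_split μ₀₀ y
    have hy := hF y
    have hnn : 0 ≤ (ν {y}).toReal := ENNReal.toReal_nonneg
    linarith
  · -- Backward: construct the measure
    intro hpos
    -- the pmf of the counterfactual measure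
    set g : ℝ → ENNReal := fun y => μ₁₀ {y} + μ₀₁ {y} - μ₀₀ {y} with hg_def
    have hle : ∀ y, μ₀₀ {y} ≤ μ₁₀ {y} + μ₀₁ {y} := by
      intro y
      have h := hpos y
      have ha : (μ₀₀ {y}).toReal ≤ (μ₁₀ {y} + μ₀₁ {y}).toReal := by
        rw [ENNReal.toReal_add (measure_ne_top _ _) (measure_ne_top _ _)]
        linarith
      exact (ENNReal.toReal_le_toReal (measure_ne_top _ _)
        (ENNReal.add_ne_top.2 ⟨measure_ne_top _ _, measure_ne_top _ _⟩)).1 ha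
    have hg : ∀ y, g y + μ₀₀ {y} = μ₁₀ {y} + μ₀₁ {y} := fun y =>
      tsub_add_cancel_of_le (hle y)
    haveI : Countable S := hS.to_subtype
    set ν : Measure ℝ := Measure.sum (fun s : S => g s • Measure.dirac (s : ℝ)) with hν_def
    -- compute ν on measurable sets
    have hν_apply : ∀ A : Set ℝ, MeasurableSet A →
        ν A = ∑' s : S, Set.indicator A g (s : ℝ) := by
      intro A hA
      rw [hν_def, Measure.sum_apply _ hA]
      congr 1
      funext s
      rw [Measure.smul_apply, Measure.dirac_apply' _ hA, smul_eq_mul]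
      by_cases h : (s : ℝ) ∈ A <;> simp [h]
    -- compute each given measure on measurable sets
    have hmeas : ∀ (μ : Measure ℝ), μ S = 1 → [IsProbabilityMeasure μ] →
        ∀ A : Set ℝ, MeasurableSet A →
        μ A = ∑' s : S, Set.indicator A (fun y => μ {y}) (s : ℝ) := by
      intro μ hμS _ A hA
      have hSc : μ Sᶜ = 0 := by
        have := prob_compl_eq_one_sub (μ := μ) hS.measurableSet
        rw [hμS] at this; simpa using this
      have h1 : μ A = μ (A ∩ S) := (measure_inter_conull hSc).symm
      have h2 : μ (A ∩ S) = ∑' b : (A ∩ S : Set ℝ), μ {(b : ℝ)} :=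
        meas_countable_tsum μ _ (hS.mono Set.inter_subset_right)
      rw [h1, h2]
      rw [tsum_subtype (A ∩ S) (fun y => μ {y}), tsum_subtype S (Set.indicator A fun y => μ {y})]
      congr 1
      funext x
      rw [Set.indicator_indicator, Set.inter_comm]
    -- the key additive identity
    have hkey : ∀ A : Set ℝ, MeasurableSet A → ν A + μ₀₀ A = μ₁₀ A + μ₀₁ A := by
      intro A hA
      rw [hν_apply A hA, hmeas μ₀₀ hs₀₀ A hA, hmeas μ₁₀ hs₁₀ A hA, hmeas μ₀₁ hs₀₁ A hA,
        ← ENNReal.tsum_add, ← ENNReal.tsum_add]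
      congr 1
      funext s
      by_cases h : (s : ℝ) ∈ A
      · simp only [Set.indicator_of_mem h]
        exact hg s
      · simp [Set.indicator_of_notMem h]
    have hν_univ : ν Set.univ = 1 := by
      have h := hkey Set.univ MeasurableSet.univ
      simp only [measure_univ] at h
      have : ν Set.univ + 1 = 2 := by rw [h]; norm_num
      have h2 : ν Set.univ = 2 - 1 := by
        rw [← this, ENNReal.add_sub_cancel_right ENNReal.one_ne_top]
      rw [h2, show (2:ENNReal) = 1 + 1 from one_add_one_eq_two.symm,
        ENNReal.add_sub_cancel_right ENNReal.one_ne_top]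
    haveI hνprob : IsProbabilityMeasure ν := ⟨hν_univ⟩
    refine ⟨ν, hνprob, fun y => ?_⟩
    have h := hkey (Set.Iic y) measurableSet_Iic
    have h' : ((ν (Set.Iic y)) + μ₀₀ (Set.Iic y)).toReal
        = ((μ₁₀ (Set.Iic y)) + μ₀₁ (Set.Iic y)).toReal := by rw [h]
    rw [ENNReal.toReal_add (measure_ne_top _ _) (measure_ne_top _ _),
      ENNReal.toReal_add (measure_ne_top _ _) (measure_ne_top _ _)] at h'
    linarith
end
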